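/- Let i, i', i'' be distinct indices with m(i,i') < ∞, m(i,i'') ≥ 3, and m(i',i'') ≥ 3. Then for every integer k with 0 < k < m(i,i') − 1, we have B(α_{i,i'}(k), α_{i''}) ≤ −1, where α_{i,i'}(k) = (sin((k+1)π/m)/sin(π/m))·α_i + (sin(kπ/m)/sin(π/m))·α_{i'} with m = m(i,i'). -/

import Mathlib

open scoped Classical

noncomputable section

namespace BKBilliards

variable {I : Type*} [Fintype I] [DecidableEq I]
variable {M : CoxeterMatrix I} {W : Type*} [Group W]

/-- The simple root indexed by `i`, i.e. the `i`-th standard basis vector of `ℝ^I`. -/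
def sroot (i : I) : I → ℝ := Pi.single i 1

/-- The data `(ρ, B)` constitutes the standard geometric representation of the Coxeter
system `cs`, together with its induced symmetric bilinear form (with `μ = 1` on all
pairs whose Coxeter matrix entry is `∞`, encoded as `0`). -/
structure IsGeometric (cs : CoxeterSystem M W) (ρ : Representation ℝ W (I → ℝ))
    (B : LinearMap.BilinForm ℝ (I → ℝ)) : Prop where
  /-- `B(αᵢ, αᵢ') = -cos (π / m i i')` when `m i i' ≠ ∞`. -/
  form_apply_of_ne_zero : ∀ i i' : I, M i i' ≠ 0 →
    B (sroot i) (sroot i') = - Real.cos (Real.pi / (M i i' : ℝ))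
  /-- `B(αᵢ, αᵢ') = -1` when `m i i' = ∞` (encoded as `0`). -/
  form_apply_of_eq_zero : ∀ i i' : I, M i i' = 0 → B (sroot i) (sroot i') = -1
  /-- Each simple reflection acts by the reflection formula. -/
  simple_apply : ∀ (i : I) (v : I → ℝ), ρ (cs.simple i) v = v - (2 * B v (sroot i)) • sroot i

variable (ρ : Representation ℝ W (I → ℝ))

/-- The root system `Φ = {w αᵢ : w ∈ W, i ∈ I}`. -/
def Phi : Set (I → ℝ) := {v | ∃ (w : W) (i : I), v = ρ w (sroot i)}

/-- The half-space `H_β⁺ = {w ∈ W : w β ∈ Φ⁺}`: for a root `β`, membership amounts to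
`w β` being a nonnegative combination of the simple roots. -/
def Hplus (β : I → ℝ) : Set W := {w : W | 0 ≤ ρ w β}

/-- `R(𝓛) = {β ∈ Φ : 𝓛 ⊆ H_β⁺}`. -/
def RL (L : Set W) : Set (I → ℝ) := {β | β ∈ Phi ρ ∧ ∀ w ∈ L, w ∈ Hplus ρ β}

/-- `𝓛` is convex if it equals the intersection of all half-spaces containing it. -/
def IsConvex (L : Set W) : Prop := ∀ u : W, (∀ β ∈ RL ρ L, u ∈ Hplus ρ β) → u ∈ L

/-- The set of separators of `u`: `Sep(u) = {β ∈ R(𝓛) : u β ∈ Φ⁻}`. -/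
def Sep (L : Set W) (u : W) : Set (I → ℝ) := {β | β ∈ RL ρ L ∧ ρ u β ≤ 0}

variable (cs : CoxeterSystem M W)

/-- The noninvertible Bender–Knuth toggle `τᵢ` associated to the convex set `𝓛`. -/
def toggle (L : Set W) (i : I) (u : W) : W :=
  if ρ u⁻¹ (sroot i) ∈ RL ρ L then u else cs.simple i * u

/-- For a word `𝗐 = i_M ⋯ i_1` (a list whose head is `i_M`), the composition
`τ_𝗐 = τ_{i_M} ⋯ τ_{i_1}`. -/
def toggleWord (L : Set W) (l : List I) (u : W) : W :=
  l.foldr (fun i v => toggle ρ cs L i v) u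

/-- `β` dominates `β'` if `H_β⁺ ⊇ H_{β'}⁺`. -/
def Dominates (β β' : I → ℝ) : Prop := Hplus ρ β' ⊆ Hplus ρ β

/-- A small root: a positive root dominating no positive root other than itself. -/
def IsSmall (β : I → ℝ) : Prop :=
  β ∈ Phi ρ ∧ 0 ≤ β ∧ ∀ β', β' ∈ Phi ρ → 0 ≤ β' → Dominates ρ β β' → β' = β

/-- `β` is a transmitting root of the stratum `Str(R)`:
`β ∈ R(𝓛)` and `β = -w⁻¹ αᵢ` for some `w` with `Sep(w) = R` and some `i ∈ I`. -/
def IsTransmitting (L : Set W) (R : Set (I → ℝ)) (β : I → ℝ) : Prop :=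
  β ∈ RL ρ L ∧ ∃ (w : W) (i : I), Sep ρ L w = R ∧ β = - ρ w⁻¹ (sroot i)

end BKBilliards

open BKBilliards

namespace BKBilliards

/-- The vector `α_{i,i'}(k) = (sin((k+1)π/m)/sin(π/m)) αᵢ + (sin(kπ/m)/sin(π/m)) αᵢ'`. -/
def pairRoot {I : Type*} [Fintype I] [DecidableEq I] (i i' : I) (m : ℕ) (k : ℤ) : I → ℝ :=
  (Real.sin (((k : ℝ) + 1) * Real.pi / (m : ℝ)) / Real.sin (Real.pi / (m : ℝ))) • sroot i +
    (Real.sin ((k : ℝ) * Real.pi / (m : ℝ)) / Real.sin (Real.pi / (m : ℝ))) • sroot i'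

end BKBilliards

/-! The coefficients of `α_{i,i'}(k)` are at least `1`, because `sin` on `[π/m, π - π/m]` is at
least `sin (π/m)`, while `B(αⱼ, α_{i''}) ≤ -1/2` for `j = i, i'`, because `cos (π/n) ≥ cos (π/3)`
for `n ≥ 3` (and the value is `-1` when `m(j, i'') = ∞`). Hence the form is at most `-1/2 - 1/2`. -/

namespace Real

theorem sin_le_sin_of_le_of_le_pi_sub {c x : ℝ} (hc : 0 ≤ c) (hcx : c ≤ x) (hx : x ≤ π - c) :
    sin c ≤ sin x := by
  rcases le_total x (π / 2) with hx2 | hx2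
  · exact sin_le_sin_of_le_of_le_pi_div_two (by linarith [pi_pos]) hx2 hcx
  · rw [← sin_pi_sub x]
    exact sin_le_sin_of_le_of_le_pi_div_two (by linarith [pi_pos]) (by linarith) (by linarith)

theorem one_le_sin_mul_pi_div_div_sin_pi_div {m t : ℝ} (ht : 1 ≤ t) (htm : t ≤ m - 1) :
    1 ≤ sin (t * π / m) / sin (π / m) := by
  have hm : 0 < m := by linarith
  have hπm : π / m < π := div_lt_self pi_pos (by linarith)
  have hsin : 0 < sin (π / m) := sin_pos_of_pos_of_lt_pi (by positivity) hπm
  rw [one_le_div hsin]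
  apply sin_le_sin_of_le_of_le_pi_sub (by positivity)
  · rw [mul_div_assoc]
    exact le_mul_of_one_le_left (by positivity) ht
  · calc t * π / m ≤ (m - 1) * π / m := by gcongr
      _ = π - π / m := by field_simp

theorem one_half_le_cos_pi_div {n : ℝ} (hn : 3 ≤ n) : 1 / 2 ≤ cos (π / n) := by
  rw [← cos_pi_div_three]
  exact cos_le_cos_of_nonneg_of_le_pi (by positivity) (by linarith [pi_pos])
    (div_le_div_of_nonneg_left pi_pos.le (by norm_num) hn)

end Real

namespace BKBilliards

theorem IsGeometric.form_sroot_le_neg_half {I : Type*} [Fintype I] [DecidableEq I]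
    {M : CoxeterMatrix I} {W : Type*} [Group W] {cs : CoxeterSystem M W}
    {ρ : Representation ℝ W (I → ℝ)} {B : LinearMap.BilinForm ℝ (I → ℝ)}
    (hgeom : IsGeometric cs ρ B) {j j' : I} (h : M j j' = 0 ∨ 3 ≤ M j j') :
    B (sroot j) (sroot j') ≤ -(1 / 2) := by
  rcases h with hinf | h3
  · rw [hgeom.form_apply_of_eq_zero j j' hinf]
    norm_num
  · rw [hgeom.form_apply_of_ne_zero j j' (by omega)]
    have := Real.one_half_le_cos_pi_div (n := M j j') (by exact_mod_cast h3)
    linarith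

theorem form_pairRoot_apply {I : Type*} [Fintype I] [DecidableEq I]
    (B : LinearMap.BilinForm ℝ (I → ℝ)) (i i' : I) (m : ℕ) (k : ℤ) (v : I → ℝ) :
    B (pairRoot i i' m k) v =
      Real.sin (((k : ℝ) + 1) * Real.pi / m) / Real.sin (Real.pi / m) * B (sroot i) v +
        Real.sin ((k : ℝ) * Real.pi / m) / Real.sin (Real.pi / m) * B (sroot i') v := by
  simp only [pairRoot, map_add, map_smul, LinearMap.add_apply, LinearMap.smul_apply, smul_eq_mul]

end BKBilliards

theorem form_pairRoot_le_neg_one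
    {I : Type*} [Fintype I] [DecidableEq I] {M : CoxeterMatrix I} {W : Type*} [Group W]
    (cs : CoxeterSystem M W) (ρ : Representation ℝ W (I → ℝ))
    (B : LinearMap.BilinForm ℝ (I → ℝ)) (hgeom : IsGeometric cs ρ B)
    (i i' i'' : I) (m : ℕ)
    (h1 : M i i'' = 0 ∨ 3 ≤ M i i'')
    (h2 : M i' i'' = 0 ∨ 3 ≤ M i' i'') :
    ∀ k : ℤ, 0 < k → k < (m : ℤ) - 1 → B (pairRoot i i' m k) (sroot i'') ≤ -1 := by
  intro k hk0 hkm
  have hk1 : (1 : ℝ) ≤ k := by exact_mod_cast hk0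
  have hkm' : (k : ℝ) + 1 ≤ (m : ℝ) - 1 := by exact_mod_cast (show k + 1 ≤ (m : ℤ) - 1 by omega)
  have hc1 := Real.one_le_sin_mul_pi_div_div_sin_pi_div (m := m) (by linarith) hkm'
  have hc2 := Real.one_le_sin_mul_pi_div_div_sin_pi_div (m := m) hk1 (by linarith)
  have hb1 := hgeom.form_sroot_le_neg_half h1
  have hb2 := hgeom.form_sroot_le_neg_half h2
  rw [form_pairRoot_apply]
  nlinarith
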